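/- For the G/G/m queue with m = 1, the recursive equations reduce to the Lindley-type single-server recursions: C k = D k for all k ≥ 1, and hence D k = (A k ⊔ D (k−1)) + τ k. -/
import Mathlib


/-- `orderStat f k` is the `k`-th smallest value (0-indexed, ties counted with
multiplicity) of the finite sequence `f`. -/
noncomputable def orderStat {n : ℕ} (f : Fin n → ℝ) (k : Fin n) : ℝ :=
  f (Tuple.sort f k)

lemma le_orderStat_last {n : ℕ} (f : Fin (n + 1) → ℝ) (i : Fin (n + 1)) :
    f i ≤ orderStat f (Fin.last n) := by
  obtain ⟨j, hj⟩ := (Tuple.sort f).surjective i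
  rw [← hj]
  exact Tuple.monotone_sort f (Fin.le_last j)

/-- For the `G/G/1` queue (`m = 1`), the recursive equations reduce to the
Lindley-type single-server recursions: `C k = D k` for all `k ≥ 1`, and hence
`D k = (A k ⊔ D (k-1)) + τ k`. -/
theorem stmt6 (α τ A C D : ℕ → ℝ)
    (hα : ∀ k, 1 ≤ k → 0 ≤ α k) (hτ : ∀ k, 1 ≤ k → 0 < τ k)
    (hA0 : A 0 = 0) (hA : ∀ k, 1 ≤ k → A k = A (k - 1) + α k)
    (hD0 : D 0 = 0)
    (hC : ∀ k, 1 ≤ k → C k = (A k ⊔ D (k - 1)) + τ k)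
    (hD : ∀ k (hk : 1 ≤ k),
      D k = orderStat (fun i : Fin k => C (i.1 + 1)) ⟨k - 1, by omega⟩) :
    (∀ k, 1 ≤ k → C k = D k) ∧
    (∀ k, 1 ≤ k → D k = (A k ⊔ D (k - 1)) + τ k) := by
  have key : ∀ k, 1 ≤ k → C k = D k ∧ ∀ j, 1 ≤ j → j ≤ k → C j ≤ C k := by
    intro k
    induction k using Nat.strong_induction_on with
    | _ k ih =>
      intro hk1
      have hmono : ∀ j, 1 ≤ j → j ≤ k → C j ≤ C k := by
        intro j hj1 hjk
        rcases eq_or_lt_of_le hjk with rfl | hlt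
        · exact le_refl _
        · have hk2 : 2 ≤ k := by omega
          have ihk := ih (k - 1) (by omega) (by omega)
          have h1 : C j ≤ C (k - 1) := ihk.2 j hj1 (by omega)
          have h2 : C (k - 1) = D (k - 1) := ihk.1
          have h3 : D (k - 1) ≤ A k ⊔ D (k - 1) := le_max_right _ _
          have h4 := (hτ k (by omega)).le
          rw [hC k (by omega)]
          linarith
      refine ⟨?_, hmono⟩
      obtain ⟨n, rfl⟩ : ∃ n, k = n + 1 := ⟨k - 1, by omega⟩
      rw [hD (n + 1) (by omega)]
      set f : Fin (n + 1) → ℝ := fun i => C (i.1 + 1) with hf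
      have hidx : (⟨n + 1 - 1, by omega⟩ : Fin (n + 1)) = Fin.last n := rfl
      rw [hidx]
      have hup : orderStat f (Fin.last n) ≤ C (n + 1) := by
        show f (Tuple.sort f (Fin.last n)) ≤ C (n + 1)
        exact hmono _ (by omega) (by omega)
      have hlo : C (n + 1) ≤ orderStat f (Fin.last n) := by
        have := le_orderStat_last f (Fin.last n)
        simpa [hf] using this
      linarith
  refine ⟨fun k hk => (key k hk).1, fun k hk => ?_⟩
  rw [← (key k hk).1]
  exact hC k hk
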